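/- arXiv:0707.1502 — 4 statements merged into one kernel-verified Lean document; each statement's English description precedes it below -/
import Mathlib

section
/- Let W be the (2,2)-homogeneous tree: every vertex has exactly two incident edges that increase height by 1 and exactly two that decrease height by 1. For every β with 0 < β ≤ 1 and every vertex w₀, there exists a line r : ℤ → W (an injective map with r(n) adjacent to r(n+1) for all n) passing through w₀ such that for all integers m, n, |h(r(m), r(n)) − β|m − n|| ≤ 2, i.e., r has 2-coarse slope β. -/
/-!
With `c = (1 + β) / 2`, the integer sequence `S n = 2⌊n c⌋ - n` moves by `±1` at each step and
stays within `2` of `β n`, so a line through `w₀` whose heights are `h w₀ + S n` has 2-coarse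
slope `β`. Since every vertex has two neighbours in each height direction, such a walk can be
extended step by step in both directions without ever returning to the vertex it just left, and
in a tree a walk that never backtracks is a path.
-/

namespace SimpleGraph

variable {V : Type*} {G : SimpleGraph V}

def walkOfSeq (f : ℕ → V) (hf : ∀ n, G.Adj (f n) (f (n + 1))) : (n : ℕ) → G.Walk (f 0) (f n)
  | 0 => .nil
  | n + 1 => (walkOfSeq f hf n).concat (hf n)

lemma support_walkOfSeq (f : ℕ → V) (hf : ∀ n, G.Adj (f n) (f (n + 1))) (n : ℕ) :
    (walkOfSeq f hf n).support = (List.range (n + 1)).map f := by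
  induction n with
  | zero => rfl
  | succ n ih => simp [walkOfSeq, ih, List.range_succ]

lemma IsAcyclic.isPath_walkOfSeq (hG : G.IsAcyclic) {f : ℕ → V}
    (hf : ∀ n, G.Adj (f n) (f (n + 1))) (hnb : ∀ n, f (n + 2) ≠ f n) (n : ℕ) :
    (walkOfSeq f hf n).IsPath := by
  induction n with
  | zero => exact .nil
  | succ n ih =>
    refine ih.concat (fun hmem => ?_) (hf n)
    have hpen := hG.eq_penultimate_of_adj_end ih (hf n) hmem
    cases n with
    | zero => exact (hf 0).ne hpen.symm
    | succ n => exact hnb n (by simpa [walkOfSeq] using hpen)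

lemma IsAcyclic.injective_of_nonbacktracking (hG : G.IsAcyclic) {f : ℕ → V}
    (hf : ∀ n, G.Adj (f n) (f (n + 1))) (hnb : ∀ n, f (n + 2) ≠ f n) : Function.Injective f := by
  intro m n hmn
  have hnodup := (hG.isPath_walkOfSeq hf hnb (max m n)).support_nodup
  rw [support_walkOfSeq] at hnodup
  exact List.inj_on_of_nodup_map hnodup (by simp) (by simp) hmn

lemma IsAcyclic.injective_int_of_nonbacktracking (hG : G.IsAcyclic) {r : ℤ → V}
    (hr : ∀ n, G.Adj (r n) (r (n + 1))) (hnb : ∀ n, r (n + 2) ≠ r n) : Function.Injective r := by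
  intro m n hmn
  wlog hle : m ≤ n generalizing m n
  · exact (this hmn.symm (by omega)).symm
  have hinj := hG.injective_of_nonbacktracking (f := fun k : ℕ => r (m + k))
    (fun k => by simpa [add_assoc] using hr (m + k))
    (fun k => by simpa [add_assoc] using hnb (m + k))
  have := @hinj 0 (n - m).toNat (by simpa [Int.toNat_of_nonneg (sub_nonneg.2 hle)] using hmn)
  omega

end SimpleGraph

section HeightProfile

variable {V : Type*} {G : SimpleGraph V} {h : V → ℝ}

lemma exists_adj_height_eq_add_ne (hup : ∀ v, 1 < {w | G.Adj v w ∧ h w = h v + 1}.ncard)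
    (hdown : ∀ v, 1 < {w | G.Adj v w ∧ h w = h v - 1}.ncard) (v p : V) {s : ℝ} (hs : |s| = 1) :
    ∃ w, G.Adj v w ∧ h w = h v + s ∧ w ≠ p := by
  rcases (abs_eq zero_le_one).1 hs with rfl | rfl
  · obtain ⟨w, ⟨hadj, hw⟩, hne⟩ := Set.exists_ne_of_one_lt_ncard (hup v) p
    exact ⟨w, hadj, hw, hne⟩
  · obtain ⟨w, ⟨hadj, hw⟩, hne⟩ := Set.exists_ne_of_one_lt_ncard (hdown v) p
    exact ⟨w, hadj, by rw [hw, sub_eq_add_neg], hne⟩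

lemma exists_nonbacktracking_ray
    (hnext : ∀ (v p : V) (s : ℝ), |s| = 1 → ∃ w, G.Adj v w ∧ h w = h v + s ∧ w ≠ p)
    (t : ℕ → ℝ) (ht : ∀ n, |t (n + 1) - t n| = 1) (v p : V) (hv : h v = t 0) :
    ∃ f : ℕ → V, f 0 = v ∧ f 1 ≠ p ∧ (∀ n, G.Adj (f n) (f (n + 1))) ∧
      (∀ n, f (n + 2) ≠ f n) ∧ ∀ n, h (f n) = t n := by
  choose next hnext_spec using fun n (v p : V) => hnext v p _ (ht n)
  -- the state at time `n` is the pair `(f n, f (n + 1))`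
  let f : ℕ → V := fun n =>
    (Nat.rec (v, next 0 v p) (fun n q => (q.2, next (n + 1) q.2 q.1)) n : V × V).1
  have hf_succ_succ : ∀ n, f (n + 2) = next (n + 1) (f (n + 1)) (f n) := fun n => rfl
  have hstep : ∀ n, G.Adj (f n) (f (n + 1)) ∧ h (f (n + 1)) = h (f n) + (t (n + 1) - t n) := by
    rintro (_ | n)
    · exact ⟨(hnext_spec 0 v p).1, (hnext_spec 0 v p).2.1⟩
    · rw [hf_succ_succ]
      exact ⟨(hnext_spec _ _ _).1, (hnext_spec _ _ _).2.1⟩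
  refine ⟨f, rfl, (hnext_spec 0 v p).2.2, fun n => (hstep n).1,
    fun n => by rw [hf_succ_succ]; exact (hnext_spec _ _ _).2.2, fun n => ?_⟩
  induction n with
  | zero => exact hv
  | succ n ih => rw [(hstep n).2, ih]; ring

lemma exists_nonbacktracking_line
    (hnext : ∀ (v p : V) (s : ℝ), |s| = 1 → ∃ w, G.Adj v w ∧ h w = h v + s ∧ w ≠ p)
    (t : ℤ → ℝ) (ht : ∀ n, |t (n + 1) - t n| = 1) (w₀ : V) (hw₀ : h w₀ = t 0) :
    ∃ r : ℤ → V, r 0 = w₀ ∧ (∀ n, G.Adj (r n) (r (n + 1))) ∧ (∀ n, r (n + 2) ≠ r n) ∧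
      ∀ n, h (r n) = t n := by
  obtain ⟨f, hf0, -, hf, hfnb, hfh⟩ :=
    exists_nonbacktracking_ray hnext (fun n : ℕ => t n) (fun n => by simpa using ht n) w₀ w₀ hw₀
  obtain ⟨g, hg0, hg1, hg, hgnb, hgh⟩ :=
    exists_nonbacktracking_ray hnext (fun n : ℕ => t (-n))
      (fun n => by push_cast; rw [neg_add', abs_sub_comm]; simpa using ht (-n - 1))
      w₀ (f 1) (by simpa using hw₀)
  let r : ℤ → V := fun n => if 0 ≤ n then f n.toNat else g (-n).toNat
  have hr_nat : ∀ k : ℕ, r k = f k := by simp [r]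
  have hr_neg : ∀ k : ℕ, r (-k) = g k := by
    rintro (_ | k)
    · simp [r, hf0, hg0]
    · have hneg : ¬(0 : ℤ) ≤ -((k + 1 : ℕ) : ℤ) := by omega
      simp only [r, if_neg hneg, neg_neg, Int.toNat_natCast]
  have hr_negSucc : ∀ k : ℕ, r (Int.negSucc k) = g (k + 1) := fun k => by
    rw [Int.negSucc_eq, ← hr_neg]; push_cast; ring_nf
  refine ⟨r, by simpa [hf0] using hr_nat 0, fun n => ?_, fun n => ?_, fun n => ?_⟩
  · rcases n with k | k
    · simpa [← hr_nat] using hf k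
    · have : Int.negSucc k + 1 = -k := by rw [Int.negSucc_eq]; ring
      simpa [hr_negSucc, this, hr_neg] using (hg k).symm
  · rcases n with k | (_ | k)
    · simpa [← hr_nat] using hfnb k
    · change r (1 : ℕ) ≠ r (Int.negSucc 0)
      rw [hr_nat, hr_negSucc]
      exact hg1.symm
    · have : Int.negSucc (k + 1) + 2 = -k := by rw [Int.negSucc_eq]; push_cast; ring
      simpa [hr_negSucc, this, hr_neg] using (hgnb k).symm
  · rcases n with k | k
    · simpa [hr_nat] using hfh k
    · rw [hr_negSucc, hgh, Int.negSucc_eq]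
      push_cast
      rfl

end HeightProfile

noncomputable def slopeProfile (β : ℝ) (n : ℤ) : ℤ := 2 * ⌊n * ((1 + β) / 2)⌋ - n

lemma abs_slopeProfile_succ_sub (β : ℝ) (hβ : |β| ≤ 1) (n : ℤ) :
    |slopeProfile β (n + 1) - slopeProfile β n| = 1 := by
  obtain ⟨hβ₀, hβ₁⟩ := abs_le.1 hβ
  have hmono : ⌊n * ((1 + β) / 2)⌋ ≤ ⌊(n + 1 : ℤ) * ((1 + β) / 2)⌋ :=
    Int.floor_mono (by push_cast; nlinarith)
  have hjump : ⌊(n + 1 : ℤ) * ((1 + β) / 2)⌋ ≤ ⌊n * ((1 + β) / 2)⌋ + 1 := by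
    rw [← Int.floor_add_one]
    exact Int.floor_mono (by push_cast; nlinarith)
  unfold slopeProfile
  rw [abs_eq zero_le_one]
  omega

lemma slopeProfile_mem_Ioc (β : ℝ) (n : ℤ) :
    (slopeProfile β n : ℝ) ∈ Set.Ioc (β * n - 2) (β * n) := by
  have hlo := Int.sub_one_lt_floor (n * ((1 + β) / 2))
  have hhi := Int.floor_le (n * ((1 + β) / 2))
  unfold slopeProfile
  push_cast
  constructor <;> linarith

lemma abs_abs_slopeProfile_sub_sub_le {β : ℝ} (hβ : 0 ≤ β) (m n : ℤ) :
    |(|(slopeProfile β m : ℝ) - slopeProfile β n| - β * |(m : ℝ) - n|)| ≤ 2 := by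
  obtain ⟨hm₁, hm₂⟩ := slopeProfile_mem_Ioc β m
  obtain ⟨hn₁, hn₂⟩ := slopeProfile_mem_Ioc β n
  calc |(|(slopeProfile β m : ℝ) - slopeProfile β n| - β * |(m : ℝ) - n|)|
      = |(|(slopeProfile β m : ℝ) - slopeProfile β n| - |β * ((m : ℝ) - n)|)| := by
        rw [abs_mul, abs_of_nonneg hβ]
    _ ≤ |((slopeProfile β m : ℝ) - slopeProfile β n) - β * ((m : ℝ) - n)| :=
        abs_abs_sub_abs_le_abs_sub _ _
    _ ≤ 2 := abs_le.2 ⟨by linarith, by linarith⟩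

theorem line_of_coarse_slope_in_22_tree_general {W : Type*} (G : SimpleGraph W) (hG : G.IsTree)
    (h : W → ℝ)
    (hup : ∀ v : W, {w : W | G.Adj v w ∧ h w = h v + 1}.ncard = 2)
    (hdown : ∀ v : W, {w : W | G.Adj v w ∧ h w = h v - 1}.ncard = 2)
    (β : ℝ) (hβ0 : 0 < β) (hβ1 : β ≤ 1) (w₀ : W) :
    ∃ r : ℤ → W, Function.Injective r ∧ (∀ n : ℤ, G.Adj (r n) (r (n + 1))) ∧
      (∃ n : ℤ, r n = w₀) ∧
      ∀ m n : ℤ, abs (|h (r m) - h (r n)| - β * |(m : ℝ) - (n : ℝ)|) ≤ 2 := by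
  have hnext : ∀ (v p : W) (s : ℝ), |s| = 1 → ∃ w, G.Adj v w ∧ h w = h v + s ∧ w ≠ p :=
    exists_adj_height_eq_add_ne (fun v => by simp [hup v]) (fun v => by simp [hdown v])
  have hstep (n : ℤ) : |(slopeProfile β (n + 1) : ℝ) - slopeProfile β n| = 1 := by
    exact_mod_cast abs_slopeProfile_succ_sub β (abs_le.2 ⟨by linarith, hβ1⟩) n
  obtain ⟨r, hr₀, hadj, hnb, hr⟩ := exists_nonbacktracking_line hnext
    (fun n => h w₀ + slopeProfile β n) (fun n => by simpa using hstep n) w₀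
    (by simp [slopeProfile])
  refine ⟨r, hG.isAcyclic.injective_int_of_nonbacktracking hadj hnb, hadj, ⟨0, hr₀⟩,
    fun m n => ?_⟩
  simpa [hr] using abs_abs_slopeProfile_sub_sub_le hβ0.le m n

/-- In the (2,2)-homogeneous tree, through any vertex there is a line of 2-coarse slope β
for any 0 < β ≤ 1. -/
theorem line_of_coarse_slope_in_22_tree {W : Type*} (G : SimpleGraph W) (hG : G.IsTree)
    (h : W → ℝ)
    (hedge : ∀ v w : W, G.Adj v w → h w = h v + 1 ∨ h w = h v - 1)
    (hup : ∀ v : W, {w : W | G.Adj v w ∧ h w = h v + 1}.ncard = 2)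
    (hdown : ∀ v : W, {w : W | G.Adj v w ∧ h w = h v - 1}.ncard = 2)
    (β : ℝ) (hβ0 : 0 < β) (hβ1 : β ≤ 1) (w₀ : W) :
    ∃ r : ℤ → W, Function.Injective r ∧ (∀ n : ℤ, G.Adj (r n) (r (n + 1))) ∧
      (∃ n : ℤ, r n = w₀) ∧
      ∀ m n : ℤ, abs (|h (r m) - h (r n)| - β * |(m : ℝ) - (n : ℝ)|) ≤ 2 :=
  line_of_coarse_slope_in_22_tree_general G hG h hup hdown β hβ0 hβ1 w₀
end

section
/- Consider a sequence of real heights h(0), h(1), h(2), ... constructed greedily: h(0) = 0, and at each step n one may choose h(n+1) = h(n) + u or h(n+1) = h(n) − d where u, d ∈ [α, M'] may vary with n, choosing + when h(n) − βn ≤ 0 and − when 0 < h(n) − βn ≤ J', where J' = M' + α and 0 < β ≤ α ≤ M'. Then for all n, |h(n) − βn| ≤ J', provided |h(1) − β| ≤ J' holds initially. -/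
/-!
The interval `[-J', J']` is invariant for the discrepancy `e n = h n - β n`. From `e ≤ 0` an up-step moves it
by `u - β ∈ [0, M' - β]`, so from `[-J', 0]` it lands in `[-J', M']`; from `0 < e` a down-step moves
it by `-(d + β) ∈ [-(M' + β), -(α + β)]`, so from `(0, J']` it lands in `(-(M' + β), J' - α - β]`.
Both targets lie in `[-J', J']` because `0 < β ≤ α`.
-/

namespace GreedySlope

variable {α β M' e : ℝ}

theorem abs_add_sub_le_of_nonpos {u : ℝ} (hβ : 0 < β) (hβα : β ≤ α)
    (he_lo : -(M' + α) ≤ e) (he : e ≤ 0) (hu : u ∈ Set.Icc α M') :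
    |e + u - β| ≤ M' + α := by
  obtain ⟨hαu, huM⟩ := hu
  rw [abs_le]
  constructor <;> linarith

theorem abs_sub_sub_le_of_pos {d : ℝ} (hβ : 0 < β) (hβα : β ≤ α)
    (he : 0 < e) (he_hi : e ≤ M' + α) (hd : d ∈ Set.Icc α M') :
    |e - d - β| ≤ M' + α := by
  obtain ⟨hαd, hdM⟩ := hd
  rw [abs_le]
  constructor <;> linarith

theorem abs_discrepancy_succ_le {h : ℕ → ℝ} {n : ℕ} (hβ : 0 < β) (hβα : β ≤ α)
    (hstep : (h n - β * n ≤ 0 → ∃ u ∈ Set.Icc α M', h (n + 1) = h n + u) ∧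
      (0 < h n - β * n → h n - β * n ≤ M' + α → ∃ d ∈ Set.Icc α M', h (n + 1) = h n - d))
    (hn : |h n - β * n| ≤ M' + α) :
    |h (n + 1) - β * ↑(n + 1)| ≤ M' + α := by
  obtain ⟨he_lo, he_hi⟩ := abs_le.mp hn
  rw [Nat.cast_succ]
  rcases le_or_gt (h n - β * n) 0 with he | he
  · obtain ⟨u, hu, hup⟩ := hstep.1 he
    rw [hup, show h n + u - β * (n + 1) = (h n - β * n) + u - β by ring]
    exact abs_add_sub_le_of_nonpos hβ hβα he_lo he hu
  · obtain ⟨d, hd, hdown⟩ := hstep.2 he he_hi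
    rw [hdown, show h n - d - β * (n + 1) = (h n - β * n) - d - β by ring]
    exact abs_sub_sub_le_of_pos hβ hβα he he_hi hd

end GreedySlope

theorem greedy_slope_control_general (α β M' J' : ℝ) (h : ℕ → ℝ)
    (hβ : 0 < β) (hβα : β ≤ α) (hαM : α ≤ M') (hJ' : J' = M' + α)
    (h0 : h 0 = 0)
    (hstep : ∀ n : ℕ,
      (h n - β * n ≤ 0 → ∃ u ∈ Set.Icc α M', h (n + 1) = h n + u) ∧
      (0 < h n - β * n → h n - β * n ≤ J' → ∃ d ∈ Set.Icc α M', h (n + 1) = h n - d)) :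
    ∀ n : ℕ, |h n - β * n| ≤ J' := by
  subst hJ'
  intro n
  induction n with
  | zero =>
    rw [h0, Nat.cast_zero, mul_zero, sub_zero, abs_zero]
    linarith
  | succ n ih => exact GreedySlope.abs_discrepancy_succ_le hβ hβα (hstep n) ih

/-- The greedy height sequence stays within J' of the linear function β·n. -/
theorem greedy_slope_control (α β M' J' : ℝ) (h : ℕ → ℝ)
    (hβ : 0 < β) (hβα : β ≤ α) (hαM : α ≤ M') (hJ' : J' = M' + α)
    (h0 : h 0 = 0)
    (hstep : ∀ n : ℕ,
      (h n - β * n ≤ 0 → ∃ u ∈ Set.Icc α M', h (n + 1) = h n + u) ∧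
      (0 < h n - β * n → h n - β * n ≤ J' → ∃ d ∈ Set.Icc α M', h (n + 1) = h n - d))
    (h1 : |h 1 - β| ≤ J') :
    ∀ n : ℕ, |h n - β * n| ≤ J' :=
  greedy_slope_control_general α β M' J' h hβ hβα hαM hJ' h0 hstep
end

section
/- Let V₁, V₂ be sets with maps h₁ : V₁ → ℝ, h₂ : V₂ → ℝ (heights). Suppose there exist constants A > 0 and K > 0 such that for all reals x ≤ y, the number of points of V₁ with height in [x,y] is at most the number of points of V₂ with height in [x−K, y+K], and vice versa. If moreover both counting functions differ from (2/β)(y−x) by at most A (with K = Aβ/2), then there exists a bijection χ : V₁ → V₂ that is K-coarsely height preserving: |h₂(χ(v)) − h₁(v)| ≤ K for all v ∈ V₁. -/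
/-!
By Hall's theorem (in its form for infinite families of finite sets) there is an injection
`V₁ → V₂` moving heights by at most `K` as soon as every finite `s ⊆ V₁` has at least `#s`
points of `V₂` within height `K` of `s`. If `s` has a height gap wider than `2K`, the two sides
of the gap have disjoint such neighbourhoods and we conclude by induction. Otherwise the
neighbourhood of `s` contains every point of height in `[min s - K, max s + K]`, and the counting
hypothesis bounds `#s` by the number of those points. Applying this in both directions,
Schröder–Bernstein for injections respecting a relation gives the bijection.
-/

open Finset Function

lemma exists_abs_sub_le_of_gaps_le {ι : Type*} (s : Finset ι) (f : ι → ℝ) {K z : ℝ}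
    (hgap : ∀ u ∈ s, (∃ v ∈ s, f u < f v) → ∃ v ∈ s, f u < f v ∧ f v ≤ f u + 2 * K)
    (hlo : ∃ u ∈ s, f u ≤ z + K) (hhi : ∃ u ∈ s, z - K ≤ f u) :
    ∃ v ∈ s, |z - f v| ≤ K := by
  obtain ⟨u, hu, huz⟩ := hlo
  obtain ⟨v, hv, hvmax⟩ :=
    (s.filter (f · ≤ z + K)).exists_max_image f ⟨u, mem_filter.2 ⟨hu, huz⟩⟩
  rw [mem_filter] at hv
  refine ⟨v, hv.1, abs_le.2 ⟨by linarith [hv.2], ?_⟩⟩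
  by_contra! hvz
  obtain ⟨w, hw, hwz⟩ := hhi
  obtain ⟨x, hx, hvx, hxv⟩ := hgap v hv.1 ⟨w, hw, by linarith⟩
  exact (hvx.trans_le (hvmax x (mem_filter.2 ⟨hx, by linarith⟩))).false

section HeightMatching

variable {V₁ V₂ : Type*} {h₁ : V₁ → ℝ} {h₂ : V₂ → ℝ}

noncomputable def heightBall (hfin : ∀ x y : ℝ, {w : V₂ | h₂ w ∈ Set.Icc x y}.Finite)
    (c K : ℝ) : Finset V₂ :=
  (hfin (c - K) (c + K)).toFinset

lemma mem_heightBall {hfin : ∀ x y : ℝ, {w : V₂ | h₂ w ∈ Set.Icc x y}.Finite} {c K : ℝ}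
    {w : V₂} : w ∈ heightBall hfin c K ↔ |h₂ w - c| ≤ K := by
  rw [heightBall, Set.Finite.mem_toFinset, Set.mem_ofPred_eq, Set.mem_Icc, abs_le]
  constructor <;> rintro ⟨h, h'⟩ <;> constructor <;> linarith

lemma disjoint_biUnion_heightBall [DecidableEq V₂]
    (hfin₂ : ∀ x y : ℝ, {w : V₂ | h₂ w ∈ Set.Icc x y}.Finite) {s₁ s₂ : Finset V₁} {c K : ℝ}
    (hs₁ : ∀ v ∈ s₁, h₁ v ≤ c) (hs₂ : ∀ v ∈ s₂, c + 2 * K < h₁ v) :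
    Disjoint (s₁.biUnion fun v => heightBall hfin₂ (h₁ v) K)
      (s₂.biUnion fun v => heightBall hfin₂ (h₁ v) K) := by
  simp only [disjoint_left, mem_biUnion, mem_heightBall, abs_le]
  rintro w ⟨a, ha, hwa⟩ ⟨b, hb, hwb⟩
  linarith [hs₁ a ha, hs₂ b hb]

lemma card_le_card_biUnion_heightBall_of_gaps_le [DecidableEq V₂]
    (hfin₁ : ∀ x y : ℝ, {v : V₁ | h₁ v ∈ Set.Icc x y}.Finite)
    (hfin₂ : ∀ x y : ℝ, {w : V₂ | h₂ w ∈ Set.Icc x y}.Finite) {K : ℝ}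
    (hcount : ∀ x y : ℝ, x ≤ y →
      {v : V₁ | h₁ v ∈ Set.Icc x y}.ncard ≤ {w : V₂ | h₂ w ∈ Set.Icc (x - K) (y + K)}.ncard)
    (s : Finset V₁) (hs : s.Nonempty)
    (hgap : ∀ u ∈ s, (∃ v ∈ s, h₁ u < h₁ v) → ∃ v ∈ s, h₁ u < h₁ v ∧ h₁ v ≤ h₁ u + 2 * K) :
    #s ≤ #(s.biUnion fun v => heightBall hfin₂ (h₁ v) K) := by
  obtain ⟨u₀, hu₀, hmin⟩ := s.exists_min_image h₁ hs
  obtain ⟨u₁, hu₁, hmax⟩ := s.exists_max_image h₁ hs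
  calc #s ≤ {v : V₁ | h₁ v ∈ Set.Icc (h₁ u₀) (h₁ u₁)}.ncard := by
        rw [Set.ncard_eq_toFinset_card _ (hfin₁ _ _)]
        exact card_le_card fun v hv => by simpa using ⟨hmin v hv, hmax v hv⟩
    _ ≤ {w : V₂ | h₂ w ∈ Set.Icc (h₁ u₀ - K) (h₁ u₁ + K)}.ncard := hcount _ _ (hmin u₁ hu₁)
    _ ≤ #(s.biUnion fun v => heightBall hfin₂ (h₁ v) K) := by
        rw [Set.ncard_eq_toFinset_card _ (hfin₂ _ _)]
        refine card_le_card fun w hw => ?_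
        rw [Set.Finite.mem_toFinset, Set.mem_ofPred_eq, Set.mem_Icc] at hw
        obtain ⟨v, hv, hwv⟩ := exists_abs_sub_le_of_gaps_le s h₁ (z := h₂ w) hgap
          ⟨u₀, hu₀, by linarith⟩ ⟨u₁, hu₁, by linarith⟩
        exact mem_biUnion.2 ⟨v, hv, mem_heightBall.2 hwv⟩

lemma card_le_card_biUnion_heightBall [DecidableEq V₂]
    (hfin₁ : ∀ x y : ℝ, {v : V₁ | h₁ v ∈ Set.Icc x y}.Finite)
    (hfin₂ : ∀ x y : ℝ, {w : V₂ | h₂ w ∈ Set.Icc x y}.Finite) {K : ℝ}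
    (hcount : ∀ x y : ℝ, x ≤ y →
      {v : V₁ | h₁ v ∈ Set.Icc x y}.ncard ≤ {w : V₂ | h₂ w ∈ Set.Icc (x - K) (y + K)}.ncard)
    (s : Finset V₁) : #s ≤ #(s.biUnion fun v => heightBall hfin₂ (h₁ v) K) := by
  induction s using Finset.strongInduction with
  | H s ih =>
  rcases s.eq_empty_or_nonempty with rfl | hs
  · simp
  by_cases hgap : ∀ u ∈ s, (∃ v ∈ s, h₁ u < h₁ v) → ∃ v ∈ s, h₁ u < h₁ v ∧ h₁ v ≤ h₁ u + 2 * K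
  · exact card_le_card_biUnion_heightBall_of_gaps_le hfin₁ hfin₂ hcount s hs hgap
  push Not at hgap
  obtain ⟨u, hu, ⟨v, hv, huv⟩, hwide⟩ := hgap
  set lower := s.filter (h₁ · ≤ h₁ u)
  set upper := s.filter (¬h₁ · ≤ h₁ u)
  have hlower : lower ⊂ s := filter_ssubset.2 ⟨v, hv, not_le.2 huv⟩
  have hupper : upper ⊂ s := filter_ssubset.2 ⟨u, hu, not_not.2 le_rfl⟩
  have hdisj := disjoint_biUnion_heightBall hfin₂ (s₁ := lower) (s₂ := upper)
    (fun w hw => (mem_filter.1 hw).2)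
    (fun w hw => hwide w (mem_filter.1 hw).1 (not_le.1 (mem_filter.1 hw).2))
  classical
  calc #s = #lower + #upper := (card_filter_add_card_filter_not _).symm
    _ ≤ _ := add_le_add (ih _ hlower) (ih _ hupper)
    _ = #(s.biUnion fun v => heightBall hfin₂ (h₁ v) K) := by
        rw [← card_union_of_disjoint hdisj, ← union_biUnion, filter_union_filter_not_eq]

lemma exists_injective_abs_sub_le (hfin₁ : ∀ x y : ℝ, {v : V₁ | h₁ v ∈ Set.Icc x y}.Finite)
    (hfin₂ : ∀ x y : ℝ, {w : V₂ | h₂ w ∈ Set.Icc x y}.Finite) {K : ℝ}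
    (hcount : ∀ x y : ℝ, x ≤ y →
      {v : V₁ | h₁ v ∈ Set.Icc x y}.ncard ≤ {w : V₂ | h₂ w ∈ Set.Icc (x - K) (y + K)}.ncard) :
    ∃ f : V₁ → V₂, Injective f ∧ ∀ v, |h₂ (f v) - h₁ v| ≤ K := by
  classical
  obtain ⟨f, hf, hfK⟩ := (all_card_le_biUnion_card_iff_exists_injective _).1
    (card_le_card_biUnion_heightBall hfin₁ hfin₂ hcount)
  exact ⟨f, hf, fun v => mem_heightBall.1 (hfK v)⟩

end HeightMatching

theorem coarse_height_bijection_general {V₁ V₂ : Type*} (h₁ : V₁ → ℝ) (h₂ : V₂ → ℝ)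
    (K : ℝ)
    (hfin₁ : ∀ x y : ℝ, {v : V₁ | h₁ v ∈ Set.Icc x y}.Finite)
    (hfin₂ : ∀ x y : ℝ, {w : V₂ | h₂ w ∈ Set.Icc x y}.Finite)
    (hcount₁ : ∀ x y : ℝ, x ≤ y →
      {v : V₁ | h₁ v ∈ Set.Icc x y}.ncard ≤ {w : V₂ | h₂ w ∈ Set.Icc (x - K) (y + K)}.ncard)
    (hcount₂ : ∀ x y : ℝ, x ≤ y →
      {w : V₂ | h₂ w ∈ Set.Icc x y}.ncard ≤ {v : V₁ | h₁ v ∈ Set.Icc (x - K) (y + K)}.ncard) :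
    ∃ χ : V₁ → V₂, Function.Bijective χ ∧ ∀ v : V₁, |h₂ (χ v) - h₁ v| ≤ K := by
  obtain ⟨f, hf, hfK⟩ := exists_injective_abs_sub_le hfin₁ hfin₂ hcount₁
  obtain ⟨g, hg, hgK⟩ := exists_injective_abs_sub_le hfin₂ hfin₁ hcount₂
  exact Embedding.schroeder_bernstein_of_rel hf hg (fun v w => |h₂ w - h₁ v| ≤ K) hfK
    fun w => abs_sub_comm (h₂ w) (h₁ (g w)) ▸ hgK w

/-- Matching counting functions on height intervals yield a K-coarsely height preserving
bijection. -/
theorem coarse_height_bijection {V₁ V₂ : Type*} (h₁ : V₁ → ℝ) (h₂ : V₂ → ℝ)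
    (A K β : ℝ) (hA : 0 < A) (hK : 0 < K) (hβ : 0 < β) (hKA : K = A * β / 2)
    (hfin₁ : ∀ x y : ℝ, {v : V₁ | h₁ v ∈ Set.Icc x y}.Finite)
    (hfin₂ : ∀ x y : ℝ, {w : V₂ | h₂ w ∈ Set.Icc x y}.Finite)
    (hcount₁ : ∀ x y : ℝ, x ≤ y →
      {v : V₁ | h₁ v ∈ Set.Icc x y}.ncard ≤ {w : V₂ | h₂ w ∈ Set.Icc (x - K) (y + K)}.ncard)
    (hcount₂ : ∀ x y : ℝ, x ≤ y →
      {w : V₂ | h₂ w ∈ Set.Icc x y}.ncard ≤ {v : V₁ | h₁ v ∈ Set.Icc (x - K) (y + K)}.ncard)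
    (hdev₁ : ∀ x y : ℝ, x ≤ y →
      |({v : V₁ | h₁ v ∈ Set.Icc x y}.ncard : ℝ) - 2 / β * (y - x)| ≤ A)
    (hdev₂ : ∀ x y : ℝ, x ≤ y →
      |({w : V₂ | h₂ w ∈ Set.Icc x y}.ncard : ℝ) - 2 / β * (y - x)| ≤ A) :
    ∃ χ : V₁ → V₂, Function.Bijective χ ∧ ∀ v : V₁, |h₂ (χ v) - h₁ v| ≤ K :=
  coarse_height_bijection_general h₁ h₂ K hfin₁ hfin₂ hcount₁ hcount₂
end

section
/- Let V be a tree in which every vertex has at least two incident edges that strictly increase height and at least two incident edges that strictly decrease height. Then V admits a lamination: a family of pairwise disjoint bi-infinite simple paths (lines) such that every vertex of V belongs to exactly one line. Moreover, given any vertex v and any partial line through v already constructed, the construction can be extended to a full lamination. -/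
/-!
Hall's marriage theorem gives an injection `f` sending every vertex to a height-increasing
neighbour. Hall's condition holds because the `≥ 2 #s` upward edges leaving a finite set `s` are
distinct edges of the forest on `s ∪ N(s)`; orienting each component towards a root, every edge
is determined by its endpoint farther from the root, so `2 #s ≤ #(s ∪ N(s))`. Likewise there is
an injection `g` to height-decreasing neighbours, and Schröder–Bernstein, applied to `f` and `g`,
yields a permutation `e` moving every vertex to a higher neighbour. Heights strictly increase
along `e`-orbits, so the orbits are bi-infinite lines partitioning `V`.
-/

open Function

namespace SimpleGraph

variable {V : Type*} {G : SimpleGraph V}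

theorem IsAcyclic.exists_parent (hG : G.IsAcyclic) :
    ∃ par : V → V, ∀ ⦃v w : V⦄, G.Adj v w → par v = w ∨ par w = v := by
  classical
  let root : V → V := fun v => (G.connectedComponentMk v).out
  have root_eq_of_adj : ∀ ⦃v w⦄, G.Adj v w → root v = root w := fun v w hvw => by
    simp only [root, ConnectedComponent.connectedComponentMk_eq_of_adj hvw]
  let p : ∀ v, G.Path v (root v) := fun v =>
    (ConnectedComponent.exact (G.connectedComponentMk v).out_eq.symm).some.toPath
  refine ⟨fun v => (p v).1.snd, fun v w hvw => ?_⟩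
  by_cases hw : w ∈ (p v).1.support
  · left
    show (p v).1.snd = w
    have hedge : (⟨_, (p v).2.takeUntil hw⟩ : G.Path v w) = Path.singleton hvw :=
      (hG.subsingleton_path _ _).elim _ _
    rw [← Walk.snd_takeUntil hvw.ne.symm _ hw]
    simpa using congrArg (fun q : G.Path v w => q.1.snd) hedge
  · right
    show (p w).1.snd = v
    have hback : (⟨_, (Walk.isPath_copy _ rfl (root_eq_of_adj hvw).symm).2 (p w).2⟩ :
        G.Path w (root v)) = ⟨Walk.cons hvw.symm (p v).1, (p v).2.cons hw⟩ :=
      (hG.subsingleton_path _ _).elim _ _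
    simpa using congrArg (fun q : G.Path w (root v) => q.1.snd) hback

theorem IsAcyclic.card_le_card_biUnion [DecidableEq V] (hG : G.IsAcyclic) {t : V → Finset V}
    (ht_adj : ∀ v, ∀ w ∈ t v, G.Adj v w) (ht_asymm : ∀ v, ∀ w ∈ t v, v ∉ t w)
    (ht_card : ∀ v, 2 ≤ (t v).card) (s : Finset V) : s.card ≤ (s.biUnion t).card := by
  obtain ⟨par, hpar⟩ := hG.exists_parent
  -- `child x` is the endpoint of the edge `x` farther from the root
  let child : (_ : V) × V → V := fun x => if par x.1 = x.2 then x.1 else x.2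
  have edge_eq : ∀ x : (_ : V) × V, G.Adj x.1 x.2 → s(x.1, x.2) = s(child x, par (child x)) := by
    rintro ⟨v, w⟩ hvw
    by_cases hv : par v = w
    · simp [child, hv]
    · have hw : par w = v := (hpar hvw).resolve_left hv
      simp [child, hv, hw, Sym2.eq_swap]
  have maps_to : ∀ x ∈ s.sigma t, child x ∈ s ∪ s.biUnion t := by
    rintro ⟨v, w⟩ hx
    rw [Finset.mem_sigma] at hx
    by_cases hv : par v = w
    · simp [child, hv, hx.1]
    · simp only [child, hv, if_false]
      exact Finset.mem_union_right _ (Finset.mem_biUnion.2 ⟨v, hx.1, hx.2⟩)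
  have inj_on : Set.InjOn child (s.sigma t) := by
    rintro ⟨v, w⟩ hx ⟨v', w'⟩ hy hxy
    simp only [Finset.coe_sigma, Set.mem_sigma_iff, Finset.mem_coe] at hx hy
    have hsym : s(v, w) = s(v', w') := by
      rw [edge_eq ⟨v, w⟩ (ht_adj _ _ hx.2), edge_eq ⟨v', w'⟩ (ht_adj _ _ hy.2), hxy]
    rcases Sym2.eq_iff.1 hsym with ⟨rfl, rfl⟩ | ⟨rfl, rfl⟩
    · rfl
    · exact absurd hy.2 (ht_asymm _ _ hx.2)
  suffices 2 * s.card ≤ s.card + (s.biUnion t).card by omega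
  calc 2 * s.card ≤ (s.sigma t).card := by
        rw [Finset.card_sigma, mul_comm, ← smul_eq_mul, ← Finset.sum_const]
        exact Finset.sum_le_sum fun v _ => ht_card v
    _ ≤ (s ∪ s.biUnion t).card := Finset.card_le_card_of_injOn child maps_to inj_on
    _ ≤ s.card + (s.biUnion t).card := Finset.card_union_le _ _

theorem IsAcyclic.exists_injective_adj (hG : G.IsAcyclic) {R : V → V → Prop}
    (hR : ∀ v w, R v w → ¬R w v) (hcard : ∀ v, 2 ≤ {w | G.Adj v w ∧ R v w}.ncard) :
    ∃ f : V → V, Injective f ∧ ∀ v, G.Adj v (f v) ∧ R v (f v) := by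
  classical
  have hfin : ∀ v, {w | G.Adj v w ∧ R v w}.Finite := fun v =>
    Set.finite_of_ncard_pos (by linarith [hcard v])
  let t : V → Finset V := fun v => (hfin v).toFinset
  have mem_t : ∀ {v w}, w ∈ t v ↔ G.Adj v w ∧ R v w := Set.Finite.mem_toFinset _
  have hall := hG.card_le_card_biUnion (t := t) (fun v w hw => (mem_t.1 hw).1)
    (fun v w hw hv => hR _ _ (mem_t.1 hw).2 (mem_t.1 hv).2)
    (fun v => (Set.ncard_eq_toFinset_card _ (hfin v)) ▸ hcard v)
  obtain ⟨f, hf, hft⟩ := (Finset.all_card_le_biUnion_card_iff_exists_injective t).1 hall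
  exact ⟨f, hf, fun v => mem_t.1 (hft v)⟩

theorem IsAcyclic.exists_perm_adj_lt {β : Type*} [Preorder β] (hG : G.IsAcyclic) (h : V → β)
    (hup : ∀ v, 2 ≤ {w | G.Adj v w ∧ h v < h w}.ncard)
    (hdown : ∀ v, 2 ≤ {w | G.Adj v w ∧ h w < h v}.ncard) :
    ∃ e : Equiv.Perm V, ∀ v, G.Adj v (e v) ∧ h v < h (e v) := by
  obtain ⟨f, hf, hf_up⟩ := hG.exists_injective_adj (fun _ _ => lt_asymm) hup
  obtain ⟨g, hg, hg_down⟩ := hG.exists_injective_adj (fun _ _ => lt_asymm) hdown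
  obtain ⟨u, hu, hu_up⟩ := Embedding.schroeder_bernstein_of_rel hf hg
    (fun v w => G.Adj v w ∧ h v < h w) hf_up fun w => ⟨(hg_down w).1.symm, (hg_down w).2⟩
  exact ⟨Equiv.ofBijective u hu, hu_up⟩

end SimpleGraph

def IsLamination {V : Type*} (G : SimpleGraph V) (P : Set (Set V)) : Prop :=
  (∀ L ∈ P, ∃ r : ℤ → V, Injective r ∧ (∀ n : ℤ, G.Adj (r n) (r (n + 1))) ∧ Set.range r = L) ∧
    ∀ v : V, ∃! L : Set V, L ∈ P ∧ v ∈ L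

theorem Equiv.Perm.isLamination_sameCycle {V β : Type*} [Preorder β] {G : SimpleGraph V}
    (e : Equiv.Perm V) (h : V → β) (he : ∀ v, G.Adj v (e v) ∧ h v < h (e v)) :
    IsLamination G (Set.range fun v => {w | e.SameCycle v w}) := by
  have zpow_succ_apply : ∀ (n : ℤ) v, (e ^ (n + 1)) v = e ((e ^ n) v) := fun n v => by
    rw [add_comm, zpow_add, zpow_one, Equiv.Perm.mul_apply]
  refine ⟨?_, fun v => ⟨{w | e.SameCycle v w}, ⟨⟨v, rfl⟩, Equiv.Perm.SameCycle.refl e v⟩, ?_⟩⟩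
  · rintro L ⟨v, rfl⟩
    have height_strictMono : StrictMono fun n : ℤ => h ((e ^ n) v) :=
      strictMono_int_of_lt_succ fun n => zpow_succ_apply n v ▸ (he _).2
    refine ⟨fun n => (e ^ n) v, height_strictMono.injective.of_comp, fun n => ?_, rfl⟩
    simpa only [zpow_succ_apply] using (he _).1
  · rintro L ⟨⟨w, rfl⟩, hwv⟩
    ext x
    exact ⟨fun hwx => hwv.symm.trans hwx, fun hvx => hwv.trans hvx⟩

/-- A tree in which every vertex has at least two height-increasing and at least two
height-decreasing incident edges admits a lamination: a partition of its vertex set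
into vertex sets of bi-infinite simple paths. -/
theorem lamination_exists {V : Type*} (G : SimpleGraph V) (hG : G.IsTree)
    (h : V → ℝ)
    (hup : ∀ v : V, 2 ≤ {w : V | G.Adj v w ∧ h v < h w}.ncard)
    (hdown : ∀ v : V, 2 ≤ {w : V | G.Adj v w ∧ h w < h v}.ncard) :
    ∃ P : Set (Set V),
      (∀ L ∈ P, ∃ r : ℤ → V, Function.Injective r ∧
        (∀ n : ℤ, G.Adj (r n) (r (n + 1))) ∧ Set.range r = L) ∧
      ∀ v : V, ∃! L : Set V, L ∈ P ∧ v ∈ L := by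
  obtain ⟨e, he⟩ := hG.isAcyclic.exists_perm_adj_lt h hup hdown
  exact ⟨_, e.isLamination_sameCycle h he⟩
end
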